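/- arXiv:2011.01620 — 3 statements merged into one kernel-verified Lean document; each statement's English description precedes it below -/
import Mathlib

section
/- Let C_n = {0,1}^n, and for 1 ≤ i ≤ n+1 let 0_i, 1_i : C_n → C_{n+1} be the maps inserting 0 (resp. 1) in the i-th coordinate. For an abelian group A define R_i, S_i, P_i : ℤ[A^{C_{n+1}}] → ℤ[A^{C_n}] as the maps induced on free abelian groups by f ↦ f∘0_i, f ↦ f∘1_i, and f ↦ f∘0_i + f∘1_i respectively, and set δ = Σ_{i=1}^{n+1} (-1)^i (P_i − R_i − S_i). Then δ ∘ δ = 0, i.e. (ℤ[A^{C_*}], δ) is a chain complex. -/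
set_option synthInstance.maxHeartbeats 1000000
/-- `R_i`: induced by precomposition with the insertion of `false` (i.e. `0`) in
position `i`, on free abelian groups: `ℤ[A^{C_{n+1}}] → ℤ[A^{C_n}]`. -/
def faceR (A : Type) [AddCommGroup A] (n : ℕ) (i : Fin (n + 1)) :
    FreeAbelianGroup ((Fin (n + 1) → Bool) → A) →+ FreeAbelianGroup ((Fin n → Bool) → A) :=
  FreeAbelianGroup.map (fun f c => f (i.insertNth false c))

/-- `S_i`: induced by precomposition with the insertion of `true` (i.e. `1`) in
position `i`. -/
def faceS (A : Type) [AddCommGroup A] (n : ℕ) (i : Fin (n + 1)) :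
    FreeAbelianGroup ((Fin (n + 1) → Bool) → A) →+ FreeAbelianGroup ((Fin n → Bool) → A) :=
  FreeAbelianGroup.map (fun f c => f (i.insertNth true c))

/-- `P_i`: induced by the set map `f ↦ f∘0_i + f∘1_i` (pointwise sum in `A`). -/
def faceP (A : Type) [AddCommGroup A] (n : ℕ) (i : Fin (n + 1)) :
    FreeAbelianGroup ((Fin (n + 1) → Bool) → A) →+ FreeAbelianGroup ((Fin n → Bool) → A) :=
  FreeAbelianGroup.map (fun f c => f (i.insertNth false c) + f (i.insertNth true c))

/-- The `Q`-construction differential `δ = Σ_{i=1}^{n+1} (-1)^i (P_i - R_i - S_i)`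
(here `i : Fin (n+1)` corresponds to the position `i+1 ∈ {1, …, n+1}`). -/
def qDelta (A : Type) [AddCommGroup A] (n : ℕ) :
    FreeAbelianGroup ((Fin (n + 1) → Bool) → A) →+ FreeAbelianGroup ((Fin n → Bool) → A) :=
  ∑ i : Fin (n + 1), ((-1 : ℤ) ^ (i.1 + 1)) •
    (faceP A n i - faceR A n i - faceS A n i)

/-!
`δ` is an alternating sum of the maps `D_i = P_i - R_i - S_i`, and each of `P_i`, `R_i`, `S_i` is
induced by a map `f ↦ a • f ∘ 0_i + b • f ∘ 1_i` with scalars `a`, `b`. Two such maps compose like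
faces of a semi-simplicial object: this combines the cubical identity
`ε_i ∘ ε'_j = ε'_{j+1} ∘ ε_i` (`i ≤ j`, `ε, ε' ∈ {0, 1}`) with the interchange law
`a (a' u + b' v) + b (a' w + b' x) = a' (a u + b w) + b' (a v + b x)`. Hence `D_j D_i = D_i D_{j+1}`
for `i ≤ j`, and `δ ∘ δ = 0` by the usual pairwise cancellation in an alternating sum of faces.
-/

theorem Fin.succ_succAbove_succAbove_of_le {n : ℕ} {i j : Fin (n + 1)} (h : i ≤ j) (k : Fin n) :
    j.succ.succAbove (i.succAbove k) = i.castSucc.succAbove (j.succAbove k) := by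
  rw [Fin.le_def] at h
  ext
  simp only [succAbove, lt_def, val_castSucc, apply_ite Fin.val, val_succ]
  split_ifs <;> omega

theorem Fin.insertNth_castSucc_insertNth {α : Type*} {n : ℕ} {i j : Fin (n + 1)} (h : i ≤ j)
    (x y : α) (c : Fin n → α) :
    insertNth (α := fun _ => α) i.castSucc y (insertNth (α := fun _ => α) j x c) =
      insertNth (α := fun _ => α) j.succ x (insertNth (α := fun _ => α) i y c) := by
  funext m
  induction m using Fin.succAboveCases j.succ with
  | x => rw [insertNth_apply_same, ← succAbove_castSucc_of_le i j h]; simp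
  | p m =>
    rw [insertNth_apply_succAbove]
    induction m using Fin.succAboveCases i with
    | x => rw [succAbove_of_castSucc_lt _ _ (castSucc_lt_succ_iff.mpr h)]; simp
    | p k => rw [succ_succAbove_succAbove_of_le h]; simp

theorem AddMonoidHom.alternating_sum_comp_alternating_sum_eq_zero {L M N : Type*}
    [AddCommGroup L] [AddCommGroup M] [AddCommGroup N] {n : ℕ}
    (d : Fin (n + 1) → M →+ N) (d' : Fin (n + 2) → L →+ M)
    (h : ∀ i j : Fin (n + 1), i ≤ j → (d j).comp (d' i.castSucc) = (d i).comp (d' j.succ)) :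
    (∑ i : Fin (n + 1), (-1 : ℤ) ^ (i : ℕ) • d i).comp
      (∑ j : Fin (n + 2), (-1 : ℤ) ^ (j : ℕ) • d' j) = 0 := by
  refine AddMonoidHom.ext fun x => ?_
  simp only [AddMonoidHom.comp_apply, AddMonoidHom.finsetSum_apply, AddMonoidHom.smul_apply,
    map_sum, map_zsmul, Finset.smul_sum, smul_smul, AddMonoidHom.zero_apply]
  rw [← Finset.sum_product', Finset.univ_product_univ,
    ← Finset.sum_add_sum_compl {p : Fin (n + 2) × Fin (n + 1) | (p.1 : ℕ) ≤ p.2},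
    add_eq_zero_iff_eq_neg, ← Finset.sum_neg_distrib]
  -- the term of `d i ∘ d' j` with `j ≤ i` cancels that of `d j ∘ d' (i + 1)`
  refine Finset.sum_bij' (fun p hp => (p.2.succ, p.1.castLT ?_))
    (fun q hq => (q.2.castSucc, q.1.pred ?_)) ?_ ?_ ?_ ?_ ?_
  all_goals simp only [Finset.mem_filter_univ, Finset.compl_filter, not_le, Prod.forall] at *
  · omega
  · rw [ne_eq, Fin.ext_iff, Fin.val_zero]; omega
  · intro j i hji
    simp only [Fin.val_castLT, Fin.val_succ]
    omega
  · intro j i hij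
    simp only [Fin.val_castSucc, Fin.val_pred]
    omega
  · intro j i _
    simp
  · intro j i _
    simp
  · intro j i hji
    have hcomm := DFunLike.congr_fun (h (j.castLT (by omega)) i hji) x
    simp only [AddMonoidHom.comp_apply, Fin.castSucc_castLT] at hcomm
    rw [hcomm, ← neg_smul]
    congr 1
    simp only [Fin.val_succ, Fin.val_castLT, pow_succ]
    ring

section FaceCombination

variable {R A : Type*} [CommSemiring R] [AddCommMonoid A] [Module R A] {n : ℕ}

variable (R) in
def faceCombination (i : Fin (n + 1)) (a b : R) (f : (Fin (n + 1) → Bool) → A) :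
    (Fin n → Bool) → A :=
  fun c => a • f (i.insertNth false c) + b • f (i.insertNth true c)

theorem faceCombination_comp_faceCombination {i j : Fin (n + 1)} (h : i ≤ j) (a b a' b' : R) :
    faceCombination R (A := A) j a b ∘ faceCombination R i.castSucc a' b' =
      faceCombination R i a' b' ∘ faceCombination R j.succ a b := by
  funext f c
  simp only [Function.comp_apply, faceCombination, Fin.insertNth_castSucc_insertNth h]
  module

end FaceCombination

section QFace

variable (A : Type) [AddCommGroup A] (n : ℕ)

theorem faceR_eq_map_faceCombination (i : Fin (n + 1)) :
    faceR A n i = FreeAbelianGroup.map (faceCombination ℕ i 1 0) := by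
  unfold faceR
  congr
  funext f c
  simp [faceCombination]

theorem faceS_eq_map_faceCombination (i : Fin (n + 1)) :
    faceS A n i = FreeAbelianGroup.map (faceCombination ℕ i 0 1) := by
  unfold faceS
  congr
  funext f c
  simp [faceCombination]

theorem faceP_eq_map_faceCombination (i : Fin (n + 1)) :
    faceP A n i = FreeAbelianGroup.map (faceCombination ℕ i 1 1) := by
  unfold faceP
  congr
  funext f c
  simp [faceCombination]

def qFace (i : Fin (n + 1)) :
    FreeAbelianGroup ((Fin (n + 1) → Bool) → A) →+ FreeAbelianGroup ((Fin n → Bool) → A) :=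
  faceP A n i - faceR A n i - faceS A n i

theorem qDelta_eq_neg_sum_qFace :
    qDelta A n = -∑ i : Fin (n + 1), (-1 : ℤ) ^ (i : ℕ) • qFace A n i := by
  simp only [qDelta, qFace, pow_succ, mul_neg_one, neg_smul, Finset.sum_neg_distrib]

variable {A n} in
theorem qFace_comp_qFace {i j : Fin (n + 1)} (h : i ≤ j) :
    (qFace A n j).comp (qFace A (n + 1) i.castSucc) =
      (qFace A n i).comp (qFace A (n + 1) j.succ) := by
  simp only [qFace, faceR_eq_map_faceCombination, faceS_eq_map_faceCombination,
    faceP_eq_map_faceCombination, AddMonoidHom.sub_comp, AddMonoidHom.comp_sub,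
    ← FreeAbelianGroup.map_comp, faceCombination_comp_faceCombination h]
  abel

end QFace

/-- `δ ∘ δ = 0`: `(ℤ[A^{C_*}], δ)` is a chain complex. -/
theorem qDelta_comp_qDelta (A : Type) [AddCommGroup A] (n : ℕ) :
    (qDelta A n).comp (qDelta A (n + 1)) = 0 := by
  rw [qDelta_eq_neg_sum_qFace, qDelta_eq_neg_sum_qFace, AddMonoidHom.neg_comp,
    AddMonoidHom.comp_neg, neg_neg]
  exact AddMonoidHom.alternating_sum_comp_alternating_sum_eq_zero _ _ fun _ _ => qFace_comp_qFace
end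

section
/- Let p : D → E be a functor between categories which is a Cartesian (Grothendieck) fibration, and let C be any category. Then the induced functor p_* : Fun(C, D) → Fun(C, E) given by postcomposition is a Cartesian fibration, and a natural transformation in Fun(C,D) is p_*-Cartesian if and only if each of its components is p-Cartesian. -/
open CategoryTheory

universe v₁ v₂ v₃ u₁ u₂ u₃

/-- A morphism `φ : d' ⟶ d` is `p`-Cartesian if for every `d''` and every
`ψ : d'' ⟶ d` together with a factorization `u` of `p ψ` through `p φ`, there is a
unique lift `χ : d'' ⟶ d'` with `χ ≫ φ = ψ` and `p χ = u`. (This is the pullback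
condition on hom-sets.) -/
def IsCartMor {D : Type u₁} {E : Type u₂} [Category.{v₁} D] [Category.{v₂} E]
    (p : D ⥤ E) {d' d : D} (φ : d' ⟶ d) : Prop :=
  ∀ (d'' : D) (ψ : d'' ⟶ d) (u : p.obj d'' ⟶ p.obj d'),
    u ≫ p.map φ = p.map ψ →
      ∃! χ : d'' ⟶ d', χ ≫ φ = ψ ∧ p.map χ = u

/-- `p` is a Cartesian (Grothendieck) fibration: every morphism `e ⟶ p(d)` in the
base admits a `p`-Cartesian lift with target `d`. -/
def IsCartFib {D : Type u₁} {E : Type u₂} [Category.{v₁} D] [Category.{v₂} E]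
    (p : D ⥤ E) : Prop :=
  ∀ (d : D) (e : E) (f : e ⟶ p.obj d),
    ∃ (d' : D) (φ : d' ⟶ d) (h : p.obj d' = e),
      IsCartMor p φ ∧ p.map φ = eqToHom h ≫ f

/-
Cartesian lifts in `Fun(C, D)` are built componentwise: lift each `f_c` to a `p`-Cartesian
`φ_c`, and define the lifted functor on a morphism `g` as the unique factorization of
`φ_c ≫ G g` through `φ_{c'}` lying over `H g`. A componentwise Cartesian transformation is
Cartesian for postcomposition, since Cartesian factorizations can be taken componentwise and
their uniqueness forces naturality. Conversely, a Cartesian transformation `η` and the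
componentwise Cartesian lift of `p ∘ η` are both Cartesian over the same base morphism, so they
differ by an isomorphism; hence every component of `η` is a `p`-Cartesian morphism composed with
an isomorphism.
-/

namespace IsCartMor

variable {D : Type u₁} {E : Type u₂} [Category.{v₁} D] [Category.{v₂} E] {p : D ⥤ E}
  {d'' d' d : D} {φ : d' ⟶ d}

noncomputable def lift (hφ : IsCartMor p φ) (ψ : d'' ⟶ d) (u : p.obj d'' ⟶ p.obj d')
    (hu : u ≫ p.map φ = p.map ψ) : d'' ⟶ d' :=
  (hφ d'' ψ u hu).exists.choose

@[simp]
lemma lift_comp (hφ : IsCartMor p φ) (ψ : d'' ⟶ d) (u : p.obj d'' ⟶ p.obj d')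
    (hu : u ≫ p.map φ = p.map ψ) : hφ.lift ψ u hu ≫ φ = ψ :=
  (hφ d'' ψ u hu).exists.choose_spec.1

@[simp]
lemma lift_comp_assoc (hφ : IsCartMor p φ) (ψ : d'' ⟶ d) (u : p.obj d'' ⟶ p.obj d')
    (hu : u ≫ p.map φ = p.map ψ) {z : D} (k : d ⟶ z) : hφ.lift ψ u hu ≫ φ ≫ k = ψ ≫ k := by
  rw [← Category.assoc, lift_comp]

@[simp]
lemma map_lift (hφ : IsCartMor p φ) (ψ : d'' ⟶ d) (u : p.obj d'' ⟶ p.obj d')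
    (hu : u ≫ p.map φ = p.map ψ) : p.map (hφ.lift ψ u hu) = u :=
  (hφ d'' ψ u hu).exists.choose_spec.2

lemma hom_ext (hφ : IsCartMor p φ) {x y : d'' ⟶ d'} (h : x ≫ φ = y ≫ φ)
    (h' : p.map x = p.map y) : x = y :=
  (hφ d'' (y ≫ φ) (p.map y) (p.map_comp y φ).symm).unique ⟨h, h'⟩ ⟨rfl, rfl⟩

lemma comp {a b : D} {φ₁ : a ⟶ b} {φ₂ : b ⟶ d} (h₁ : IsCartMor p φ₁) (h₂ : IsCartMor p φ₂) :
    IsCartMor p (φ₁ ≫ φ₂) := by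
  intro x ψ u hu
  rw [p.map_comp, ← Category.assoc] at hu
  have hu₁ : u ≫ p.map φ₁ = p.map (h₂.lift ψ _ hu) := (h₂.map_lift ..).symm
  refine ⟨h₁.lift _ u hu₁, ⟨by simp, by simp⟩, fun y ⟨hy, hy'⟩ => h₁.hom_ext ?_ (by simp [hy'])⟩
  exact h₂.hom_ext (by simpa using hy) (by simp [hy'])

lemma of_isIso (φ : d' ⟶ d) [IsIso φ] : IsCartMor p φ := by
  intro x ψ u hu
  refine ⟨ψ ≫ inv φ, ⟨by simp, ?_⟩, fun y ⟨hy, _⟩ => (IsIso.eq_comp_inv φ).2 hy⟩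
  rw [p.map_comp, ← hu, Functor.map_inv, Category.assoc, IsIso.hom_inv_id, Category.comp_id]

lemma exists_iso {a b : D} {φ : a ⟶ d} {ψ : b ⟶ d} (hφ : IsCartMor p φ) (hψ : IsCartMor p ψ)
    (u : p.obj b ≅ p.obj a) (hu : u.hom ≫ p.map φ = p.map ψ) : ∃ θ : b ≅ a, θ.hom ≫ φ = ψ := by
  have hu' : u.inv ≫ p.map ψ = p.map φ := by rw [← hu, Iso.inv_hom_id_assoc]
  exact ⟨⟨hφ.lift ψ u.hom hu, hψ.lift φ u.inv hu', hψ.hom_ext (by simp) (by simp),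
    hφ.hom_ext (by simp) (by simp)⟩, by simp⟩

end IsCartMor

section FunctorCategory

variable {C : Type u₃} {D : Type u₁} {E : Type u₂}
  [Category.{v₃} C] [Category.{v₁} D] [Category.{v₂} E] {p : D ⥤ E}

lemma isCartMor_whiskeringRight_of_app {F G : C ⥤ D} (η : F ⟶ G)
    (h : ∀ c, IsCartMor p (η.app c)) : IsCartMor ((Functor.whiskeringRight C D E).obj p) η := by
  intro K ψ u hu
  have hu' (c : C) : u.app c ≫ p.map (η.app c) = p.map (ψ.app c) :=
    congr_arg (NatTrans.app · c) hu
  let χ : K ⟶ F :=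
    { app c := (h c).lift _ _ (hu' c)
      naturality c c' g := (h c').hom_ext (by simp) (by simpa using u.naturality g) }
  refine ⟨χ, ⟨by ext; simp [χ], by ext; simp [χ]⟩, fun y ⟨hy, hy'⟩ => ?_⟩
  ext c
  exact (h c).hom_ext (by simp [χ, ← hy]) (by simp [χ, ← hy'])

section CartesianLift

variable {G : C ⥤ D} {H : C ⥤ E} {f : H ⟶ G ⋙ p} {F₀ : C → D} {φ : ∀ c, F₀ c ⟶ G.obj c}
  (hφ : ∀ c, IsCartMor p (φ c)) (hF₀ : ∀ c, p.obj (F₀ c) = H.obj c)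
  (hf : ∀ c, p.map (φ c) = eqToHom (hF₀ c) ≫ f.app c)

noncomputable def cartesianLiftFunctor : C ⥤ D where
  obj := F₀
  map {c c'} g := (hφ c').lift (φ c ≫ G.map g)
    (eqToHom (hF₀ c) ≫ H.map g ≫ eqToHom (hF₀ c').symm) (by rw [p.map_comp, hf, hf]; simp)
  map_id c := ((hφ c).hom_ext (by simp) (by simp)).symm
  map_comp g g' := (hφ _).hom_ext (by simp) (by simp)

noncomputable def cartesianLift : cartesianLiftFunctor hφ hF₀ hf ⟶ G where
  app := φ
  naturality _ _ _ := by simp [cartesianLiftFunctor]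

lemma cartesianLiftFunctor_comp : cartesianLiftFunctor hφ hF₀ hf ⋙ p = H :=
  CategoryTheory.Functor.ext hF₀ (fun _ _ _ => by simp [cartesianLiftFunctor])

lemma whiskerRight_cartesianLift :
    Functor.whiskerRight (cartesianLift hφ hF₀ hf) p =
      eqToHom (cartesianLiftFunctor_comp hφ hF₀ hf) ≫ f := by
  ext c
  simp only [Functor.whiskerRight_app, NatTrans.comp_app, eqToHom_app]
  exact hf c

end CartesianLift

lemma IsCartFib.exists_app_isCartMor_lift (hp : IsCartFib p) (G : C ⥤ D) (H : C ⥤ E)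
    (f : H ⟶ G ⋙ p) :
    ∃ (F : C ⥤ D) (φ : F ⟶ G) (h : F ⋙ p = H),
      (∀ c, IsCartMor p (φ.app c)) ∧ Functor.whiskerRight φ p = eqToHom h ≫ f := by
  choose F₀ φ hF₀ hφ hf using fun c => hp (G.obj c) (H.obj c) (f.app c)
  exact ⟨_, cartesianLift hφ hF₀ hf, cartesianLiftFunctor_comp hφ hF₀ hf, hφ,
    whiskerRight_cartesianLift hφ hF₀ hf⟩

lemma IsCartMor.app_of_whiskeringRight (hp : IsCartFib p) {F G : C ⥤ D} {η : F ⟶ G}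
    (hη : IsCartMor ((Functor.whiskeringRight C D E).obj p) η) (c : C) :
    IsCartMor p (η.app c) := by
  obtain ⟨F', φ, h, hφ, hφp⟩ :=
    hp.exists_app_isCartMor_lift G (F ⋙ p) (Functor.whiskerRight η p)
  obtain ⟨θ, rfl⟩ := (isCartMor_whiskeringRight_of_app φ hφ).exists_iso hη
    (eqToIso h.symm) (by simp [hφp])
  exact (IsCartMor.of_isIso (θ.hom.app c)).comp (hφ c)

end FunctorCategory

/-- If `p : D ⥤ E` is a Cartesian fibration, then for any category `C` the
postcomposition functor `Fun(C, D) → Fun(C, E)` is a Cartesian fibration, and a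
natural transformation is Cartesian for it if and only if all its components are
`p`-Cartesian. -/
theorem postcompose_cartFib {C : Type u₃} {D : Type u₁} {E : Type u₂}
    [Category.{v₃} C] [Category.{v₁} D] [Category.{v₂} E]
    (p : D ⥤ E) (hp : IsCartFib p) :
    IsCartFib ((Functor.whiskeringRight C D E).obj p) ∧
      ∀ (F G : C ⥤ D) (η : F ⟶ G),
        IsCartMor ((Functor.whiskeringRight C D E).obj p) η ↔
          ∀ c : C, IsCartMor p (η.app c) := by
  refine ⟨fun G H f => ?_, fun F G η =>
    ⟨fun hη => hη.app_of_whiskeringRight hp, isCartMor_whiskeringRight_of_app η⟩⟩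
  obtain ⟨F, φ, h, hφ, hφf⟩ := hp.exists_app_isCartMor_lift G H f
  exact ⟨F, φ, h, isCartMor_whiskeringRight_of_app φ hφ, hφf⟩
end

section
/- With Δ^op presented as the category of totally ordered sets [n] = {0, 1, …, n+1} and order-preserving maps preserving minimum and maximum, the assignment χ([n]) = ({0,…,n}, {0}), with χ(f)(i) = f(i) if f(i) ≠ m+1 and χ(f)(i) = 0 if f(i) = m+1, and with fiber orders given by the natural order on χ(f)⁻¹(j) = f⁻¹(j) for j ≥ 1 and by the concatenation f⁻¹(m+1) ⋆ f⁻¹(0) on χ(f)⁻¹(0), defines a functor χ : Δ^op → AB⊗_act. -/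
/-! The category `AB⊗_act` (raw data) and the functor `χ : Δ^op → AB⊗_act`. -/

structure ABObj : Type 1 where
  S : Type
  [fin : Fintype S]
  U : Set S

attribute [instance] ABObj.fin

structure ABHom (X Y : ABObj) where
  f : X.S → Y.S
  ord : Y.S → List X.S

def ABWf {X Y : ABObj} (F : ABHom X Y) : Prop :=
  Set.BijOn F.f X.U Y.U ∧
    (∀ t s, s ∈ F.ord t ↔ F.f s = t) ∧
    (∀ t, (F.ord t).Nodup)

def ABid (X : ABObj) : ABHom X X :=
  ⟨id, fun t => [t]⟩

def ABcomp {X Y Z : ABObj} (F : ABHom X Y) (G : ABHom Y Z) : ABHom X Z :=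
  ⟨G.f ∘ F.f, fun z => (G.ord z).flatMap F.ord⟩

/-- `Δ^op` presented via intervals: a morphism `[n] → [m]` in `Δ^op` is an
order-preserving map `{0,…,n+1} → {0,…,m+1}` preserving the minimal and maximal
elements. -/
def IntHom (n m : ℕ) : Type :=
  { φ : Fin (n + 2) → Fin (m + 2) //
      Monotone φ ∧ φ 0 = 0 ∧ φ (Fin.last (n + 1)) = Fin.last (m + 1) }

def intId (n : ℕ) : IntHom n n :=
  ⟨id, monotone_id, rfl, rfl⟩

/-- Composition of morphisms `[n] → [m] → [k]` of `Δ^op` in the interval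
presentation. -/
def intComp {n m k : ℕ} (φ : IntHom n m) (ψ : IntHom m k) : IntHom n k :=
  ⟨ψ.1 ∘ φ.1, ψ.2.1.comp φ.2.1,
    by simp only [Function.comp_apply, φ.2.2.1, ψ.2.2.1],
    by simp only [Function.comp_apply, φ.2.2.2, ψ.2.2.2]⟩

/-- `χ([n]) = ({0,…,n}, {0})`. -/
def chiObj (n : ℕ) : ABObj :=
  ⟨Fin (n + 1), ({0} : Set (Fin (n + 1)))⟩

/-- The underlying map of `χ(f)`: `χ(f)(i) = f(i)` if `f(i) ≠ m+1`, and `0` if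
`f(i) = m+1`. -/
def chiMap {n m : ℕ} (φ : IntHom n m) : Fin (n + 1) → Fin (m + 1) := fun i =>
  if h : φ.1 i.castSucc = Fin.last (m + 1) then 0 else (φ.1 i.castSucc).castPred h

/-- The fiber orders of `χ(f)`: for `j ≥ 1` the natural order on
`χ(f)⁻¹(j) = f⁻¹(j)`, and on `χ(f)⁻¹(0)` the concatenation `f⁻¹(m+1) ⋆ f⁻¹(0)`. -/
def chiOrd {n m : ℕ} (φ : IntHom n m) : Fin (m + 1) → List (Fin (n + 1)) := fun j =>
  if j = 0 then
    ((List.finRange (n + 1)).filter fun i => decide (φ.1 i.castSucc = Fin.last (m + 1))) ++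
      ((List.finRange (n + 1)).filter fun i => decide (φ.1 i.castSucc = 0))
  else
    (List.finRange (n + 1)).filter fun i => decide (chiMap φ i = j)

/-- The morphism part of `χ`. -/
def chi {n m : ℕ} (φ : IntHom n m) : ABHom (chiObj n) (chiObj m) :=
  ⟨chiMap φ, chiOrd φ⟩

/- Every fiber list of `χ(f)` is sorted for one total order on `{0,…,n}`: the natural order
rotated so that the final segment `f⁻¹(m+1)` comes first. A list sorted for a strict order is
determined by its members, so `χ(id) = id` is immediate, and `χ(g ∘ f) = χ(g) ∘ χ(f)` reduces
to showing that the concatenation of the fiber lists of `χ(f)` along a fiber list of `χ(g)`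
is sorted for the rotated order of `g ∘ f`. That is a case analysis on which of the values
involved are extremal, using monotonicity and `g(0) = 0`, `g(m+1) = k+1`. -/

theorem List.Pairwise.eq_of_mem_iff_lt_on {α β : Type*} [Preorder β] {f : α → β}
    {l₁ l₂ : List α} (h₁ : l₁.Pairwise (f · < f ·)) (h₂ : l₂.Pairwise (f · < f ·))
    (h : ∀ a, a ∈ l₁ ↔ a ∈ l₂) : l₁ = l₂ :=
  haveI : Std.Irrefl (f · < f ·) := ⟨fun _ => lt_irrefl _⟩
  haveI : Std.Antisymm (f · < f ·) := ⟨fun _ _ hab hba => (lt_asymm hab hba).elim⟩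
  h₁.eq_of_mem_iff h₂ h

namespace IntHom

variable {n m : ℕ} (φ : IntHom n m)

lemma apply_zero : φ.1 0 = 0 := φ.2.2.1

lemma apply_last : φ.1 (Fin.last (n + 1)) = Fin.last (m + 1) := φ.2.2.2

lemma lt_of_apply_castSucc_lt {a b : Fin (n + 1)} (h : φ.1 a.castSucc < φ.1 b.castSucc) :
    a < b :=
  Fin.castSucc_lt_castSucc_iff.1 (φ.2.1.reflect_lt h)

end IntHom

section Chi

variable {n m k : ℕ}

lemma castSucc_chiMap (φ : IntHom n m) (i : Fin (n + 1)) :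
    (chiMap φ i).castSucc =
      if φ.1 i.castSucc = Fin.last (m + 1) then 0 else φ.1 i.castSucc := by
  unfold chiMap
  split_ifs <;> simp

lemma chiMap_eq_iff (φ : IntHom n m) (i : Fin (n + 1)) (t : Fin (m + 1)) :
    chiMap φ i = t ↔
      φ.1 i.castSucc = Fin.last (m + 1) ∧ t = 0 ∨ φ.1 i.castSucc = t.castSucc := by
  rw [← Fin.castSucc_inj, castSucc_chiMap]
  split_ifs with h
  · simp [h, eq_comm]
  · simp [h]

lemma chiMap_zero (φ : IntHom n m) : chiMap φ 0 = 0 :=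
  (chiMap_eq_iff φ 0 0).2 (Or.inr φ.apply_zero)

lemma chiMap_intId (n : ℕ) : chiMap (intId n) = id := by
  funext i
  rw [id, ← Fin.castSucc_inj, castSucc_chiMap]
  exact if_neg (Fin.castSucc_lt_last i).ne

lemma chiMap_intComp (φ : IntHom n m) (ψ : IntHom m k) :
    chiMap (intComp φ ψ) = chiMap ψ ∘ chiMap φ := by
  funext i
  rw [Function.comp_apply, ← Fin.castSucc_inj, castSucc_chiMap, castSucc_chiMap,
    castSucc_chiMap]
  by_cases h : φ.1 i.castSucc = Fin.last (m + 1)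
  · simp [intComp, h, ψ.apply_last, ψ.apply_zero]
  · simp only [h, if_false]
    rfl

lemma mem_chiOrd_iff (φ : IntHom n m) (t : Fin (m + 1)) (s : Fin (n + 1)) :
    s ∈ chiOrd φ t ↔ chiMap φ s = t := by
  unfold chiOrd
  split_ifs with ht
  · simp [ht, chiMap_eq_iff]
  · simp

/-- The rotated order on `{0,…,n}` attached to `f`: elements sent to `m+1` come first. -/
def chiKey (φ : IntHom n m) (i : Fin (n + 1)) : Bool ×ₗ Fin (n + 1) :=
  toLex (decide (φ.1 i.castSucc ≠ Fin.last (m + 1)), i)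

lemma chiKey_lt_chiKey_iff (φ : IntHom n m) (x y : Fin (n + 1)) :
    chiKey φ x < chiKey φ y ↔
      φ.1 x.castSucc = Fin.last (m + 1) ∧ φ.1 y.castSucc ≠ Fin.last (m + 1) ∨
      (φ.1 x.castSucc = Fin.last (m + 1) ↔ φ.1 y.castSucc = Fin.last (m + 1)) ∧ x < y := by
  unfold chiKey
  rw [Prod.Lex.toLex_lt_toLex]
  by_cases hx : φ.1 x.castSucc = Fin.last (m + 1) <;>
    by_cases hy : φ.1 y.castSucc = Fin.last (m + 1) <;> simp [hx, hy]

lemma pairwise_chiOrd (φ : IntHom n m) (t : Fin (m + 1)) :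
    (chiOrd φ t).Pairwise (chiKey φ · < chiKey φ ·) := by
  have sorted_filter (p : Fin (n + 1) → Bool)
      (hp : ∀ x y, p x → p y →
        (φ.1 x.castSucc = Fin.last (m + 1) ↔ φ.1 y.castSucc = Fin.last (m + 1))) :
      ((List.finRange (n + 1)).filter p).Pairwise (chiKey φ · < chiKey φ ·) :=
    ((List.pairwise_lt_finRange _).filter p).imp_of_mem fun hx hy hxy =>
      (chiKey_lt_chiKey_iff φ _ _).2 <| Or.inr
        ⟨hp _ _ (List.of_mem_filter hx) (List.of_mem_filter hy), hxy⟩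
  unfold chiOrd
  split_ifs with ht
  · refine List.pairwise_append.2 ⟨sorted_filter _ ?_, sorted_filter _ ?_, ?_⟩
    · simp_all
    · simp_all
    · simp only [List.mem_filter, decide_eq_true_eq]
      intro x hx y hy
      exact (chiKey_lt_chiKey_iff φ x y).2 (Or.inl ⟨hx.2, by simp [hy.2]⟩)
  · refine sorted_filter _ fun x y hx hy => ?_
    simp only [decide_eq_true_eq, chiMap_eq_iff, ht, and_false, false_or] at hx hy
    rw [hx, hy]

lemma chiOrd_eq_of_pairwise (φ : IntHom n m) (t : Fin (m + 1)) {l : List (Fin (n + 1))}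
    (hl : l.Pairwise (chiKey φ · < chiKey φ ·)) (hmem : ∀ s, s ∈ l ↔ chiMap φ s = t) :
    chiOrd φ t = l :=
  (pairwise_chiOrd φ t).eq_of_mem_iff_lt_on hl fun s =>
    (mem_chiOrd_iff φ t s).trans (hmem s).symm

lemma chiKey_intComp_lt_of_chiMap_eq (φ : IntHom n m) (ψ : IntHom m k) {x y : Fin (n + 1)}
    (hxy : chiMap φ x = chiMap φ y) (h : chiKey φ x < chiKey φ y) :
    chiKey (intComp φ ψ) x < chiKey (intComp φ ψ) y := by
  rw [← Fin.castSucc_inj, castSucc_chiMap, castSucc_chiMap] at hxy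
  rw [chiKey_lt_chiKey_iff] at h ⊢
  simp only [intComp, Function.comp_apply]
  grind [ψ.apply_zero, ψ.apply_last]

lemma chiKey_intComp_lt_of_chiKey_lt (φ : IntHom n m) (ψ : IntHom m k) {x y : Fin (n + 1)}
    (h : chiKey ψ (chiMap φ x) < chiKey ψ (chiMap φ y)) :
    chiKey (intComp φ ψ) x < chiKey (intComp φ ψ) y := by
  rw [chiKey_lt_chiKey_iff, ← Fin.castSucc_lt_castSucc_iff, castSucc_chiMap,
    castSucc_chiMap] at h
  rw [chiKey_lt_chiKey_iff]
  simp only [intComp, Function.comp_apply]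
  grind [ψ.apply_zero, ψ.apply_last, φ.lt_of_apply_castSucc_lt]

lemma abWf_chi (φ : IntHom n m) : ABWf (chi φ) :=
  ⟨Set.bijOn_singleton.2 (chiMap_zero φ), mem_chiOrd_iff φ,
    fun t => (pairwise_chiOrd φ t).imp fun h => ne_of_apply_ne _ h.ne⟩

lemma chi_intId (n : ℕ) : chi (intId n) = ABid (chiObj n) := by
  refine congrArg₂ ABHom.mk (chiMap_intId n) (funext fun t => ?_)
  refine chiOrd_eq_of_pairwise _ t (List.pairwise_singleton _ t) fun s => ?_
  rw [chiMap_intId]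
  exact List.mem_singleton

lemma chiOrd_intComp (φ : IntHom n m) (ψ : IntHom m k) (j : Fin (k + 1)) :
    chiOrd (intComp φ ψ) j = (chiOrd ψ j).flatMap (chiOrd φ) := by
  refine chiOrd_eq_of_pairwise _ j (List.pairwise_flatMap.2 ⟨?_, ?_⟩) fun s => ?_
  · intro t _
    refine (pairwise_chiOrd φ t).imp_of_mem fun hx hy h => ?_
    rw [mem_chiOrd_iff] at hx hy
    exact chiKey_intComp_lt_of_chiMap_eq φ ψ (hx.trans hy.symm) h
  · refine (pairwise_chiOrd ψ j).imp fun h x hx y hy => ?_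
    rw [mem_chiOrd_iff] at hx hy
    exact chiKey_intComp_lt_of_chiKey_lt φ ψ (hx ▸ hy ▸ h)
  · simp [mem_chiOrd_iff, chiMap_intComp]

lemma chi_intComp (φ : IntHom n m) (ψ : IntHom m k) :
    chi (intComp φ ψ) = ABcomp (chi φ) (chi ψ) :=
  congrArg₂ ABHom.mk (chiMap_intComp φ ψ) (funext (chiOrd_intComp φ ψ))

end Chi

/-- `χ` is a well-defined functor `Δ^op → AB⊗_act`: each `χ(f)` is a well-formed
morphism (its underlying map restricts to a bijection `{0} → {0}` and its lists are
total orders on the fibers), and `χ` preserves identities and composition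
(including the compatibility of the fiber orderings). -/
theorem chi_functor :
    (∀ (n m : ℕ) (φ : IntHom n m), ABWf (chi φ)) ∧
    (∀ n : ℕ, chi (intId n) = ABid (chiObj n)) ∧
    (∀ (n m k : ℕ) (φ : IntHom n m) (ψ : IntHom m k),
      chi (intComp φ ψ) = ABcomp (chi φ) (chi ψ)) := by
  exact ⟨fun _ _ φ => abWf_chi φ, chi_intId, fun _ _ _ φ ψ => chi_intComp φ ψ⟩
end
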